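/- Let Δ ⊆ ℝ^n be a nonempty closed convex set, Ψ : ℝ^n → ℝ differentiable and σ_Ψ-strongly convex on Δ (D_Ψ(x,y) ≥ (σ_Ψ/2)‖x−y‖² on Δ, where D_Ψ(x,y) = Ψ(x) − Ψ(y) − ⟨∇Ψ(y), x−y⟩), and Φ : ℝ^n → ℝ convex differentiable with μ* ∈ Δ, Φ* = Φ(μ*). Let A > 0, B ≥ 0, φ* ≥ 0, and let (μ^t)_{t≥1} ⊆ Δ, (ℓ^t)_{t≥1} ⊆ ℝ^n, (φ^t)_{t≥1} with φ^t ≥ 0 satisfy for every t: (a) ⟨η_t ℓ^t + ∇Ψ(μ^{t+1}) − ∇Ψ(μ^t), μ^{t+1} − ν⟩ ≤ 0 for all ν ∈ Δ; (b) ‖ℓ^t‖² ≤ A φ^t + B; (c) ⟨μ* − μ^t, ℓ^t⟩ ≤ φ* − φ^t; (d) ⟨μ* − μ^t, ∇Φ(μ^t)⟩ ≤ Φ* − Φ(μ^t); with non-increasing step sizes 0 < η_{t+1} ≤ η_t ≤ σ_Ψ/(2A) and D_Ψ(μ*, μ^1) ≤ a†. Set C₁ = φ* + B/A and ξ_k =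 η_k ⟨μ* − μ^k, ℓ^k − ∇Φ(μ^k)⟩. Then for every T ≥ 1: Σ_{k=1}^T η_k (Φ(μ^k) − Φ*) ≤ (1 + 4Aη_1/σ_Ψ) a† + Σ_{k=1}^T ξ_k + ((4AC₁ + 2B)/σ_Ψ) Σ_{k=1}^T η_k². -/

import Mathlib

open scoped RealInnerProductSpace

/-!
Each mirror-descent step, tested against `μ*` and combined with the three-point identity of the
Bregman divergence and Young's inequality, gives
`η_t ⟪ℓ^t, μ^t - μ*⟫ ≤ d_t - d_{t+1} + η_t² ‖ℓ^t‖² / (2σ)` with `d_t = D(μ*, μ^t)`.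
By (b) and (c) the quantity `η_t φ^t` appears on both sides of this inequality, and since
`2Aη_t ≤ σ` it can be absorbed. What remains telescopes with the non-increasing weights
`1 + 2Aη_t/(3σ)`, and (d) converts `η_t ⟪ℓ^t, μ^t - μ*⟫` into `η_t (Φ(μ^t) - Φ*) - ξ_t`.
-/

section Bregman

variable {E : Type*} [NormedAddCommGroup E] [InnerProductSpace ℝ E]

/-- `D_Ψ(x, y)`, with `g` standing for `∇Ψ`. -/
def bregmanDiv (Ψ : E → ℝ) (g : E → E) (x y : E) : ℝ :=
  Ψ x - Ψ y - ⟪g y, x - y⟫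

theorem bregmanDiv_three_point (Ψ : E → ℝ) (g : E → E) (x y z : E) :
    ⟪g y - g x, y - z⟫ = bregmanDiv Ψ g z y + bregmanDiv Ψ g y x - bregmanDiv Ψ g z x := by
  simp only [bregmanDiv, inner_sub_left, inner_sub_right]
  ring

theorem real_inner_le_young (v w : E) {σ : ℝ} (hσ : 0 < σ) :
    ⟪v, w⟫ ≤ σ / 2 * ‖w‖ ^ 2 + ‖v‖ ^ 2 / (2 * σ) := by
  have hsq : 0 ≤ (σ * ‖w‖ - ‖v‖) ^ 2 / (2 * σ) := by positivity
  have hexpand : (σ * ‖w‖ - ‖v‖) ^ 2 / (2 * σ) =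
      σ / 2 * ‖w‖ ^ 2 + ‖v‖ ^ 2 / (2 * σ) - ‖v‖ * ‖w‖ := by
    field_simp
    ring
  linarith [real_inner_le_norm v w]

/-- `hopt` is the optimality condition of the mirror-descent step `x ↦ x'` with loss `v`,
tested at `u`. -/
theorem inner_le_bregmanDiv_sub_of_mirror_step {Ψ : E → ℝ} {g : E → E} {σ : ℝ} (hσ : 0 < σ)
    {x x' u v : E} (hstrong : σ / 2 * ‖x' - x‖ ^ 2 ≤ bregmanDiv Ψ g x' x)
    (hopt : ⟪v + g x' - g x, x' - u⟫ ≤ 0) :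
    ⟪v, x - u⟫ ≤ bregmanDiv Ψ g u x - bregmanDiv Ψ g u x' + ‖v‖ ^ 2 / (2 * σ) := by
  have hsplit : ⟪v + g x' - g x, x' - u⟫ = ⟪v, x' - u⟫ + ⟪g x' - g x, x' - u⟫ := by
    rw [add_sub_assoc, inner_add_left]
  have hmove : ⟪v, x - u⟫ = ⟪v, x' - u⟫ + ⟪v, x - x'⟫ := by
    rw [← inner_add_right, sub_add_sub_cancel']
  have hyoung := real_inner_le_young v (x - x') hσ
  rw [norm_sub_rev] at hyoung
  linarith [bregmanDiv_three_point Ψ g x x' u]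

theorem mul_inner_le_bregmanDiv_sub_of_mirror_step {Ψ : E → ℝ} {g : E → E} {σ η : ℝ}
    (hσ : 0 < σ) {x x' u ℓ : E} (hstrong : σ / 2 * ‖x' - x‖ ^ 2 ≤ bregmanDiv Ψ g x' x)
    (hopt : ⟪η • ℓ + g x' - g x, x' - u⟫ ≤ 0) :
    η * ⟪ℓ, x - u⟫ ≤ bregmanDiv Ψ g u x - bregmanDiv Ψ g u x' + η ^ 2 * ‖ℓ‖ ^ 2 / (2 * σ) := by
  simpa only [real_inner_smul_left, norm_smul, mul_pow, Real.norm_eq_abs, sq_abs] using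
    inner_le_bregmanDiv_sub_of_mirror_step hσ hstrong hopt

end Bregman

section SelfBounding

/-- The constant `4/3` is `1 / (1 - 1/4)`. -/
theorem le_of_self_bounding {x r d p b c : ℝ} (hx : 0 ≤ x) (hc₀ : 0 ≤ c) (hc : c ≤ 1 / 4)
    (hb : 0 ≤ b) (hlow : x - p ≤ r) (hup : r ≤ d + c * x + b) :
    r ≤ (1 + 4 / 3 * c) * d + 4 / 3 * c * p + 4 / 3 * b := by
  have hx_le : (1 - c) * x ≤ p + d + b := by linarith
  have habsorb : c * x ≤ 4 / 3 * c * ((1 - c) * x) := by nlinarith [mul_nonneg hc₀ hx]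
  nlinarith [mul_le_mul_of_nonneg_left hx_le (by positivity : (0 : ℝ) ≤ 4 / 3 * c),
    mul_nonneg hc₀ hb]

theorem sum_Icc_mul_sub_succ_le {w d : ℕ → ℝ} (hw : ∀ t ≥ 1, w (t + 1) ≤ w t)
    (hw₀ : ∀ t ≥ 1, 0 ≤ w t) (hd : ∀ t ≥ 1, 0 ≤ d t) (T : ℕ) :
    ∑ k ∈ Finset.Icc 1 T, w k * (d k - d (k + 1)) ≤ w 1 * d 1 := by
  rcases Nat.eq_zero_or_pos T with rfl | hT
  · simpa using mul_nonneg (hw₀ 1 le_rfl) (hd 1 le_rfl)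
  suffices h : ∑ k ∈ Finset.Icc 1 T, w k * (d k - d (k + 1)) + w T * d (T + 1) ≤ w 1 * d 1 by
    linarith [mul_nonneg (hw₀ T hT) (hd (T + 1) (by omega))]
  induction T, hT using Nat.le_induction with
  | base =>
    rw [Finset.Icc_self, Finset.sum_singleton]
    exact le_of_eq (by ring)
  | succ m hm ih =>
    rw [Finset.sum_Icc_succ_top (by omega)]
    nlinarith [mul_le_mul_of_nonneg_right (hw m hm) (hd (m + 1) (by omega))]

theorem sum_le_of_self_bounding {A B σ φstar : ℝ} (hA : 0 ≤ A) (hB : 0 ≤ B) (hσ : 0 < σ)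
    {η φ d r : ℕ → ℝ} (hη₀ : ∀ t ≥ 1, 0 ≤ η t) (hηanti : ∀ t ≥ 1, η (t + 1) ≤ η t)
    (hηle : ∀ t ≥ 1, 2 * A * η t ≤ σ) (hφ : ∀ t ≥ 1, 0 ≤ φ t) (hd : ∀ t ≥ 1, 0 ≤ d t)
    (hlow : ∀ t ≥ 1, η t * (φ t - φstar) ≤ r t)
    (hup : ∀ t ≥ 1, r t ≤ d t - d (t + 1) + η t ^ 2 * (A * φ t + B) / (2 * σ)) (T : ℕ) :
    ∑ k ∈ Finset.Icc 1 T, r k ≤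
      (1 + 2 * A * η 1 / (3 * σ)) * d 1 +
        2 * (A * φstar + B) / (3 * σ) * ∑ k ∈ Finset.Icc 1 T, η k ^ 2 := by
  set w : ℕ → ℝ := fun t => 1 + 2 * A * η t / (3 * σ)
  have hstep : ∀ t ≥ 1,
      r t ≤ w t * (d t - d (t + 1)) + 2 * (A * φstar + B) / (3 * σ) * η t ^ 2 := by
    intro t ht
    have hηt := hη₀ t ht
    have h := le_of_self_bounding (mul_nonneg hηt (hφ t ht)) (p := η t * φstar) (r := r t)
      (d := d t - d (t + 1)) (c := A * η t / (2 * σ)) (b := B * η t ^ 2 / (2 * σ))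
      (by positivity) (by rw [div_le_iff₀ (by positivity)]; linarith [hηle t ht])
      (by positivity) (by rw [← mul_sub]; exact hlow t ht) (by convert hup t ht using 1; ring)
    convert h using 1
    simp only [w]
    field_simp
    ring
  have hw : ∀ t ≥ 1, w (t + 1) ≤ w t := fun t ht => by
    simp only [w]
    gcongr
    exact hηanti t ht
  have hw₀ : ∀ t ≥ 1, 0 ≤ w t := fun t ht => by have := hη₀ t ht; positivity
  calc ∑ k ∈ Finset.Icc 1 T, r k
      ≤ ∑ k ∈ Finset.Icc 1 T,
          (w k * (d k - d (k + 1)) + 2 * (A * φstar + B) / (3 * σ) * η k ^ 2) :=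
        Finset.sum_le_sum fun k hk => hstep k (Finset.mem_Icc.mp hk).1
    _ = ∑ k ∈ Finset.Icc 1 T, w k * (d k - d (k + 1)) +
          2 * (A * φstar + B) / (3 * σ) * ∑ k ∈ Finset.Icc 1 T, η k ^ 2 := by
        rw [Finset.sum_add_distrib, Finset.mul_sum]
    _ ≤ _ := by gcongr; exact sum_Icc_mul_sub_succ_le hw hw₀ hd T

theorem self_bounding_constants_le {A B σ φstar η₁ C₁ d a S : ℝ} (hA : 0 < A) (hB : 0 ≤ B)
    (hσ : 0 < σ) (hφstar : 0 ≤ φstar) (hη₁ : 0 ≤ η₁) (hC₁ : C₁ = φstar + B / A) (hd : 0 ≤ d)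
    (hda : d ≤ a) (hS : 0 ≤ S) :
    (1 + 2 * A * η₁ / (3 * σ)) * d + 2 * (A * φstar + B) / (3 * σ) * S ≤
      (1 + 4 * A * η₁ / σ) * a + (4 * A * C₁ + 2 * B) / σ * S := by
  have hcoef₁ : 1 + 2 * A * η₁ / (3 * σ) ≤ 1 + 4 * A * η₁ / σ := by
    rw [add_le_add_iff_left, div_le_div_iff₀ (by positivity) hσ]
    nlinarith [mul_nonneg (mul_nonneg hA.le hη₁) hσ.le]
  have hcoef₂ : 2 * (A * φstar + B) / (3 * σ) ≤ (4 * A * C₁ + 2 * B) / σ := by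
    have hAC : A * C₁ = A * φstar + B := by rw [hC₁, mul_add, mul_div_cancel₀ B hA.ne']
    rw [mul_assoc, hAC, div_le_div_iff₀ (by positivity) hσ]
    nlinarith [mul_nonneg (mul_nonneg hA.le hφstar) hσ.le, mul_nonneg hB hσ.le]
  gcongr

end SelfBounding

theorem md_pathwise_regret_decomposition_general
    {n : ℕ}
    (Δ : Set (EuclideanSpace ℝ (Fin n)))
    (Ψ : EuclideanSpace ℝ (Fin n) → ℝ)
    (gΨ : EuclideanSpace ℝ (Fin n) → EuclideanSpace ℝ (Fin n))
    (D : EuclideanSpace ℝ (Fin n) → EuclideanSpace ℝ (Fin n) → ℝ)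
    (hD : ∀ x y, D x y = Ψ x - Ψ y - ⟪gΨ y, x - y⟫)
    (σΨ : ℝ) (hσΨ : 0 < σΨ)
    (hstrong : ∀ x ∈ Δ, ∀ y ∈ Δ, σΨ / 2 * ‖x - y‖ ^ 2 ≤ D x y)
    (Φ : EuclideanSpace ℝ (Fin n) → ℝ)
    (gΦ : EuclideanSpace ℝ (Fin n) → EuclideanSpace ℝ (Fin n))
    (μstar : EuclideanSpace ℝ (Fin n)) (hμstar : μstar ∈ Δ)
    (Φstar : ℝ)
    (A B φstar : ℝ) (hA : 0 < A) (hB : 0 ≤ B) (hφstar : 0 ≤ φstar)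
    (μ : ℕ → EuclideanSpace ℝ (Fin n)) (ℓ : ℕ → EuclideanSpace ℝ (Fin n))
    (φ : ℕ → ℝ) (η : ℕ → ℝ)
    (hμΔ : ∀ t ≥ 1, μ t ∈ Δ)
    (hφpos : ∀ t ≥ 1, 0 ≤ φ t)
    (hopt : ∀ t ≥ 1, ∀ ν ∈ Δ,
      ⟪η t • ℓ t + gΨ (μ (t + 1)) - gΨ (μ t), μ (t + 1) - ν⟫ ≤ 0)
    (hgrowth : ∀ t ≥ 1, ‖ℓ t‖ ^ 2 ≤ A * φ t + B)
    (hconvφ : ∀ t ≥ 1, ⟪μstar - μ t, ℓ t⟫ ≤ φstar - φ t)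
    (hconvΦ : ∀ t ≥ 1, ⟪μstar - μ t, gΦ (μ t)⟫ ≤ Φstar - Φ (μ t))
    (hηpos : ∀ t ≥ 1, 0 < η t)
    (hηdec : ∀ t ≥ 1, η (t + 1) ≤ η t)
    (hηle : ∀ t ≥ 1, η t ≤ σΨ / (2 * A))
    (adag : ℝ) (hadag : D μstar (μ 1) ≤ adag)
    (C₁ : ℝ) (hC₁ : C₁ = φstar + B / A)
    (ξ : ℕ → ℝ) (hξ : ∀ k, ξ k = η k * ⟪μstar - μ k, ℓ k - gΦ (μ k)⟫) :
    ∀ T ≥ 1,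
      ∑ k ∈ Finset.Icc 1 T, η k * (Φ (μ k) - Φstar) ≤
        (1 + 4 * A * η 1 / σΨ) * adag + ∑ k ∈ Finset.Icc 1 T, ξ k +
          (4 * A * C₁ + 2 * B) / σΨ * ∑ k ∈ Finset.Icc 1 T, η k ^ 2 := by
  intro T _
  obtain rfl : D = bregmanDiv Ψ gΨ := funext fun x => funext fun y => hD x y
  set d : ℕ → ℝ := fun t => bregmanDiv Ψ gΨ μstar (μ t)
  set r : ℕ → ℝ := fun t => η t * ⟪ℓ t, μ t - μstar⟫
  have hd : ∀ t ≥ 1, 0 ≤ d t := fun t ht =>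
    (by positivity : (0 : ℝ) ≤ σΨ / 2 * ‖μstar - μ t‖ ^ 2).trans
      (hstrong _ hμstar _ (hμΔ t ht))
  have hinner_comm : ∀ t, ⟪ℓ t, μ t - μstar⟫ = -⟪μstar - μ t, ℓ t⟫ := fun t => by
    rw [← inner_neg_left, neg_sub, real_inner_comm]
  have hregret : ∀ t ≥ 1, η t * (Φ (μ t) - Φstar) ≤ ξ t + r t := fun t ht => by
    have hid : ξ t + r t = η t * -⟪μstar - μ t, gΦ (μ t)⟫ := by
      simp only [r, hξ, hinner_comm, inner_sub_right]
      ring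
    rw [hid]
    exact mul_le_mul_of_nonneg_left (by linarith [hconvΦ t ht]) (hηpos t ht).le
  have hlow : ∀ t ≥ 1, η t * (φ t - φstar) ≤ r t := fun t ht =>
    mul_le_mul_of_nonneg_left (by linarith [hconvφ t ht, hinner_comm t]) (hηpos t ht).le
  have hup : ∀ t ≥ 1, r t ≤ d t - d (t + 1) + η t ^ 2 * (A * φ t + B) / (2 * σΨ) := fun t ht =>
    (mul_inner_le_bregmanDiv_sub_of_mirror_step hσΨ (hstrong _ (hμΔ (t + 1) (by omega)) _
      (hμΔ t ht)) (hopt t ht μstar hμstar)).trans (by gcongr; exact hgrowth t ht)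
  have hηle' : ∀ t ≥ 1, 2 * A * η t ≤ σΨ := fun t ht => by
    have h := hηle t ht
    rwa [le_div_iff₀ (by positivity), mul_comm] at h
  have hsum_r : ∑ k ∈ Finset.Icc 1 T, r k ≤ (1 + 4 * A * η 1 / σΨ) * adag +
      (4 * A * C₁ + 2 * B) / σΨ * ∑ k ∈ Finset.Icc 1 T, η k ^ 2 :=
    (sum_le_of_self_bounding hA.le hB hσΨ (fun t ht => (hηpos t ht).le) hηdec hηle' hφpos hd
      hlow hup T).trans <| self_bounding_constants_le hA hB hσΨ hφstar (hηpos 1 le_rfl).le hC₁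
        (hd 1 le_rfl) hadag (Finset.sum_nonneg fun k _ => sq_nonneg (η k))
  calc ∑ k ∈ Finset.Icc 1 T, η k * (Φ (μ k) - Φstar)
      ≤ ∑ k ∈ Finset.Icc 1 T, (ξ k + r k) :=
        Finset.sum_le_sum fun k hk => hregret k (Finset.mem_Icc.mp hk).1
    _ = ∑ k ∈ Finset.Icc 1 T, ξ k + ∑ k ∈ Finset.Icc 1 T, r k := Finset.sum_add_distrib
    _ ≤ _ := by linarith

/-- Pathwise regret decomposition underlying Proposition 1 of the paper:
`Σ_{k=1}^T η_k (Φ(μ^k) − Φ*) ≤ (1 + 4Aη_1/σ_Ψ) a† + Σ_{k=1}^T ξ_k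
 + ((4AC₁ + 2B)/σ_Ψ) Σ_{k=1}^T η_k²`. -/
theorem md_pathwise_regret_decomposition
    {n : ℕ}
    (Δ : Set (EuclideanSpace ℝ (Fin n)))
    (hΔne : Δ.Nonempty) (hΔclosed : IsClosed Δ) (hΔconv : Convex ℝ Δ)
    (Ψ : EuclideanSpace ℝ (Fin n) → ℝ)
    (gΨ : EuclideanSpace ℝ (Fin n) → EuclideanSpace ℝ (Fin n))
    (hΨ : ∀ x, HasGradientAt Ψ (gΨ x) x)
    (D : EuclideanSpace ℝ (Fin n) → EuclideanSpace ℝ (Fin n) → ℝ)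
    (hD : ∀ x y, D x y = Ψ x - Ψ y - ⟪gΨ y, x - y⟫)
    (σΨ : ℝ) (hσΨ : 0 < σΨ)
    (hstrong : ∀ x ∈ Δ, ∀ y ∈ Δ, σΨ / 2 * ‖x - y‖ ^ 2 ≤ D x y)
    (Φ : EuclideanSpace ℝ (Fin n) → ℝ)
    (gΦ : EuclideanSpace ℝ (Fin n) → EuclideanSpace ℝ (Fin n))
    (hΦconv : ConvexOn ℝ Set.univ Φ)
    (hΦgrad : ∀ x, HasGradientAt Φ (gΦ x) x)
    (μstar : EuclideanSpace ℝ (Fin n)) (hμstar : μstar ∈ Δ)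
    (Φstar : ℝ) (hΦstar : Φstar = Φ μstar)
    (A B φstar : ℝ) (hA : 0 < A) (hB : 0 ≤ B) (hφstar : 0 ≤ φstar)
    (μ : ℕ → EuclideanSpace ℝ (Fin n)) (ℓ : ℕ → EuclideanSpace ℝ (Fin n))
    (φ : ℕ → ℝ) (η : ℕ → ℝ)
    (hμΔ : ∀ t ≥ 1, μ t ∈ Δ)
    (hφpos : ∀ t ≥ 1, 0 ≤ φ t)
    (hopt : ∀ t ≥ 1, ∀ ν ∈ Δ,
      ⟪η t • ℓ t + gΨ (μ (t + 1)) - gΨ (μ t), μ (t + 1) - ν⟫ ≤ 0)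
    (hgrowth : ∀ t ≥ 1, ‖ℓ t‖ ^ 2 ≤ A * φ t + B)
    (hconvφ : ∀ t ≥ 1, ⟪μstar - μ t, ℓ t⟫ ≤ φstar - φ t)
    (hconvΦ : ∀ t ≥ 1, ⟪μstar - μ t, gΦ (μ t)⟫ ≤ Φstar - Φ (μ t))
    (hηpos : ∀ t ≥ 1, 0 < η t)
    (hηdec : ∀ t ≥ 1, η (t + 1) ≤ η t)
    (hηle : ∀ t ≥ 1, η t ≤ σΨ / (2 * A))
    (adag : ℝ) (hadag : D μstar (μ 1) ≤ adag)
    (C₁ : ℝ) (hC₁ : C₁ = φstar + B / A)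
    (ξ : ℕ → ℝ) (hξ : ∀ k, ξ k = η k * ⟪μstar - μ k, ℓ k - gΦ (μ k)⟫) :
    ∀ T ≥ 1,
      ∑ k ∈ Finset.Icc 1 T, η k * (Φ (μ k) - Φstar) ≤
        (1 + 4 * A * η 1 / σΨ) * adag + ∑ k ∈ Finset.Icc 1 T, ξ k +
          (4 * A * C₁ + 2 * B) / σΨ * ∑ k ∈ Finset.Icc 1 T, η k ^ 2 :=
  md_pathwise_regret_decomposition_general Δ Ψ gΨ D hD σΨ hσΨ hstrong Φ gΦ μstar hμstar Φstar A B
    φstar hA hB hφstar μ ℓ φ η hμΔ hφpos hopt hgrowth hconvφ hconvΦ hηpos hηdec hηle adag hadag C₁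
    hC₁ ξ hξ
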